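/- arXiv:2104.12206 — 3 statements merged into one kernel-verified Lean document; each statement's English description precedes it below -/
import Mathlib

section
/- Let d > 1 be an integer. There exists a real constant K > 0 (one may take K = d^d / 2^{d(d-1)-1}) such that for every real ε ∈ (0,1), every real r > 1, every monic polynomial p of degree d over ℂ, and every α ∈ ℂ, the following holds: if all roots z₁, …, z_d of p(z) = α lie in the open disk of radius r centered at 0, and each root has distance greater than ε from every critical point of p, then for every pair of distinct indices i < j we have |z_i − z_j| > K·(ε/r)^{d²}. -/
/-!
Evaluate `p'` at a root `zᵢ` of `p - α` in two ways. Since `p' = (∏ₖ (X - zₖ))'`, we get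
`p'(zᵢ) = ∏_{k ≠ i} (zᵢ - zₖ)`, of modulus at most `|zᵢ - zⱼ| (2r)^(d-2)`. Factoring `p'` over
the critical points instead gives `p'(zᵢ) = d ∏_c (zᵢ - c)`, of modulus at least `d ε^(d-1)`.
Hence `|zᵢ - zⱼ| ≥ d ε^(d-1) / (2r)^(d-2)`, which exceeds `K (ε/r)^(d²)` because `d ≤ 2^(d-1)`.
-/

open Polynomial Finset

theorem Polynomial.eval_derivative_prod_X_sub_C {R ι : Type*} [CommRing R] [DecidableEq ι]
    {s : Finset ι} (z : ι → R) {i : ι} (hi : i ∈ s) :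
    (derivative (∏ k ∈ s, (X - C (z k)))).eval (z i) = ∏ k ∈ s.erase i, (z i - z k) := by
  rw [← mul_prod_erase s _ hi, derivative_mul]
  simp [eval_prod]

theorem prod_erase_norm_sub_le_mul_pow {ι E : Type*} [Fintype ι] [DecidableEq ι]
    [SeminormedAddCommGroup E] {z : ι → E} {r : ℝ} (hz : ∀ k, ‖z k‖ ≤ r) {i j : ι}
    (hij : i ≠ j) :
    ∏ k ∈ univ.erase i, ‖z i - z k‖ ≤ ‖z i - z j‖ * (2 * r) ^ (Fintype.card ι - 2) := by
  have hj : j ∈ univ.erase i := mem_erase.2 ⟨hij.symm, mem_univ j⟩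
  rw [← mul_prod_erase _ _ hj]
  gcongr
  calc ∏ k ∈ (univ.erase i).erase j, ‖z i - z k‖
      ≤ ∏ _k ∈ (univ.erase i).erase j, 2 * r :=
        prod_le_prod (fun _ _ => norm_nonneg _) fun k _ =>
          (norm_sub_le _ _).trans (by linarith [hz i, hz k])
    _ = (2 * r) ^ (Fintype.card ι - 2) := by
        rw [prod_const, card_erase_of_mem hj, card_erase_of_mem (mem_univ i), card_univ]
        rfl

theorem Polynomial.norm_leadingCoeff_mul_pow_natDegree_le_norm_eval {K : Type*}
    [NormedField K] [IsAlgClosed K] (f : K[X]) (w : K) {ε : ℝ} (hε : 0 ≤ ε)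
    (h : ∀ c ∈ f.roots, ε ≤ ‖w - c‖) : ‖f.leadingCoeff‖ * ε ^ f.natDegree ≤ ‖f.eval w‖ := by
  have hnorm : ‖(f.roots.map (w - ·)).prod‖ = (f.roots.map fun c => ‖w - c‖).prod := by
    simpa [Multiset.map_map] using map_multiset_prod (normHom : K →*₀ ℝ) (f.roots.map (w - ·))
  have hprod : ε ^ f.natDegree ≤ (f.roots.map fun c => ‖w - c‖).prod := by
    simpa [← IsAlgClosed.card_roots_eq_natDegree] using
      Multiset.prod_map_le_prod_map₀ (fun _ => ε) _ (fun _ _ => hε) h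
  rw [(IsAlgClosed.splits f).eval_eq_prod_roots, norm_mul, hnorm]
  gcongr

theorem natCast_pow_div_two_pow_mul_lt {d : ℕ} (hd : 2 ≤ d) {ε r : ℝ} (hε0 : 0 < ε)
    (hε1 : ε < 1) (hr : 1 < r) :
    (d : ℝ) ^ d / 2 ^ (d * (d - 1) - 1) * (ε / r) ^ (d ^ 2) <
      d * ε ^ (d - 1) / (2 * r) ^ (d - 2) := by
  obtain ⟨n, rfl⟩ : ∃ n, d = n + 2 := ⟨d - 2, by omega⟩
  have hexp : (n + 2) * (n + 1) - 1 = n + (n + 1) * (n + 1) := by ring_nf; omega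
  simp only [show n + 2 - 1 = n + 1 from rfl, show n + 2 - 2 = n from rfl, hexp]
  push_cast
  have hK : ((n : ℝ) + 2) ^ (n + 2) / 2 ^ (n + (n + 1) * (n + 1)) =
      (n + 2) / 2 ^ n * ((n + 2) / 2 ^ (n + 1)) ^ (n + 1) := by
    rw [div_pow, div_mul_div_comm, ← pow_succ', ← pow_mul, ← pow_add]
  have hratio : ((n : ℝ) + 2) / 2 ^ (n + 1) ≤ 1 := by
    rw [div_le_one (by positivity)]
    exact_mod_cast Nat.lt_two_pow_self (n := n + 1)
  have hq0 : 0 < ε / r := by positivity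
  have hq1 : ε / r < 1 := (div_lt_one (by linarith)).2 (by linarith)
  calc _ = (n + 2) / 2 ^ n * (((n + 2) / 2 ^ (n + 1)) ^ (n + 1) * (ε / r) ^ ((n + 2) ^ 2)) := by
        rw [hK, mul_assoc]
    _ ≤ (n + 2) / 2 ^ n * (ε / r) ^ ((n + 2) ^ 2) := by
        gcongr
        exact mul_le_of_le_one_left (by positivity) (pow_le_one₀ (by positivity) hratio)
    _ < (n + 2) / 2 ^ n * (ε / r) ^ (n + 1) :=
        mul_lt_mul_of_pos_left (pow_lt_pow_right_of_lt_one₀ hq0 hq1 (by nlinarith))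
          (by positivity)
    _ ≤ (n + 2) / 2 ^ n * (ε ^ (n + 1) / r ^ n) := by
        rw [div_pow, pow_succ r]
        gcongr
        exact le_mul_of_one_le_right (by positivity) hr.le
    _ = _ := by rw [mul_pow]; field_simp

theorem stmt0 (d : ℕ) (hd : 1 < d) :
    ∃ K : ℝ, K = (d : ℝ) ^ d / 2 ^ (d * (d - 1) - 1) ∧ 0 < K ∧
      ∀ (ε r : ℝ), ε ∈ Set.Ioo (0 : ℝ) 1 → 1 < r →
      ∀ (p : Polynomial ℂ), p.Monic → p.natDegree = d →
      ∀ (α : ℂ) (z : Fin d → ℂ),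
        p - Polynomial.C α = ∏ i, (Polynomial.X - Polynomial.C (z i)) →
        (∀ i, ‖z i‖ < r) →
        (∀ i (c : ℂ), (Polynomial.derivative p).eval c = 0 → ε < dist (z i) c) →
        ∀ i j : Fin d, i < j →
          K * (ε / r) ^ (d ^ 2) < ‖z i - z j‖ := by
  have hd0 : (0 : ℝ) < d := by exact_mod_cast (zero_lt_one.trans hd)
  refine ⟨_, rfl, by positivity, ?_⟩
  rintro ε r ⟨hε0, hε1⟩ hr p hp hdeg α z hfact hz hcrit i j hij
  have key : (d : ℝ) * ε ^ (d - 1) ≤ ‖z i - z j‖ * (2 * r) ^ (d - 2) :=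
    calc (d : ℝ) * ε ^ (d - 1)
        = ‖(derivative p).leadingCoeff‖ * ε ^ (derivative p).natDegree := by
          simp [hp.leadingCoeff, hdeg]
      _ ≤ ‖(derivative p).eval (z i)‖ :=
          norm_leadingCoeff_mul_pow_natDegree_le_norm_eval _ _ hε0.le fun c hc =>
            (dist_eq_norm (z i) c ▸ hcrit i c (isRoot_of_mem_roots hc)).le
      _ = ∏ k ∈ univ.erase i, ‖z i - z k‖ := by
          rw [show derivative p = derivative (p - C α) by simp, hfact,
            eval_derivative_prod_X_sub_C z (mem_univ i), norm_prod]
      _ ≤ ‖z i - z j‖ * (2 * r) ^ (d - 2) := by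
          simpa using prod_erase_norm_sub_le_mul_pow (fun k => (hz k).le) hij.ne
  calc _ < d * ε ^ (d - 1) / (2 * r) ^ (d - 2) := natCast_pow_div_two_pow_mul_lt hd hε0 hε1 hr
    _ ≤ ‖z i - z j‖ := by rwa [div_le_iff₀ (by positivity)]
end

section
/- Let q(z) = (z − z₁)⋯(z − z_d) be a monic polynomial of degree d ≥ 2 over ℂ whose roots all lie in the disk of radius r > 1 about 0, and assume |q'(z_n)| ≥ d·ε^{d−1} for all n, where ε ∈ (0,1). Then for any pair of distinct roots, |z_i − z_j| ≥ d^d ε^{d(d−1)} / (2r)^{d(d−1)−1}. -/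
/-!
Evaluating the derivative of `q = ∏ (X - C zₙ)` at its roots gives `q'(zₙ) = ∏_{m ≠ n} (zₙ - zₘ)`,
so `∏ₙ q'(zₙ)` is, up to sign, the discriminant `∏_{n ≠ m} (zₙ - zₘ)`, and the hypothesis bounds its
modulus below by `(d ε^(d-1))^d`. All `d(d-1)` factors except `zᵢ - zⱼ` have modulus at most `2r`.
-/

open Polynomial Finset

theorem Finset.prod_le_mul_pow_card_sub_one {ι R : Type*} [CommMonoidWithZero R] [Preorder R]
    [ZeroLEOneClass R] [PosMulMono R] {s : Finset ι} {f : ι → R} {M : R} {a : ι} (ha : a ∈ s)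
    (h0 : ∀ i ∈ s, 0 ≤ f i) (hM : ∀ i ∈ s, f i ≤ M) :
    ∏ i ∈ s, f i ≤ f a * M ^ (#s - 1) := by
  classical
  rw [← mul_prod_erase s f ha, ← card_erase_of_mem ha, ← prod_const]
  exact mul_le_mul_of_nonneg_left
    (prod_le_prod (fun i hi => h0 i (mem_of_mem_erase hi)) fun i hi => hM i (mem_of_mem_erase hi))
    (h0 a ha)

theorem Polynomial.prod_eval_derivative_prod_X_sub_C {ι R : Type*} [CommRing R] [DecidableEq ι]
    (s : Finset ι) (z : ι → R) :
    ∏ n ∈ s, (derivative (∏ i ∈ s, (X - C (z i)))).eval (z n) =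
      ∏ p ∈ s.offDiag, (z p.1 - z p.2) := by
  rw [prod_finset_product' _ s (fun n => s.erase n) (by simp [and_comm, ne_comm])
    (f := fun a b => z a - z b)]
  refine prod_congr rfl fun n hn => ?_
  rw [← Lagrange.nodal_eq, Lagrange.eval_nodal_derivative_eval_node_eq hn, Lagrange.eval_nodal]

theorem stmt2_general (d : ℕ) (r ε : ℝ) (hε : ε ∈ Set.Ioo (0 : ℝ) 1)
    (z : Fin d → ℂ) (q : Polynomial ℂ)
    (hq : q = ∏ i, (Polynomial.X - Polynomial.C (z i)))
    (hroots : ∀ i, ‖z i‖ < r)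
    (hderiv : ∀ n, (d : ℝ) * ε ^ (d - 1) ≤ ‖(Polynomial.derivative q).eval (z n)‖) :
    ∀ i j : Fin d, i ≠ j →
      (d : ℝ) ^ d * ε ^ (d * (d - 1)) / (2 * r) ^ (d * (d - 1) - 1) ≤
        ‖z i - z j‖ := by
  intro i j hij
  have hmem : (i, j) ∈ (univ : Finset (Fin d)).offDiag := by simpa using hij
  have hcard : #(univ : Finset (Fin d)).offDiag = d * (d - 1) := by
    simp [offDiag_card, Nat.mul_sub_one]
  have hdist : ∀ n m, ‖z n - z m‖ ≤ 2 * r := fun n m => by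
    linarith [norm_sub_le (z n) (z m), hroots n, hroots m]
  have hr : 0 < 2 * r := by linarith [norm_nonneg (z i), hroots i]
  rw [div_le_iff₀ (by positivity)]
  calc (d : ℝ) ^ d * ε ^ (d * (d - 1)) = ∏ _n : Fin d, (d : ℝ) * ε ^ (d - 1) := by
        rw [prod_const, card_univ, Fintype.card_fin, mul_pow, ← pow_mul, mul_comm (d - 1)]
    _ ≤ ∏ n, ‖(derivative q).eval (z n)‖ :=
        prod_le_prod (fun _ _ => mul_nonneg d.cast_nonneg (pow_nonneg hε.1.le _)) fun n _ => hderiv n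
    _ = ∏ p ∈ univ.offDiag, ‖z p.1 - z p.2‖ := by
        rw [← norm_prod, ← norm_prod, hq, prod_eval_derivative_prod_X_sub_C]
    _ ≤ ‖z i - z j‖ * (2 * r) ^ (d * (d - 1) - 1) :=
        hcard ▸ prod_le_mul_pow_card_sub_one hmem (fun _ _ => norm_nonneg _)
          fun p _ => hdist p.1 p.2

theorem stmt2 (d : ℕ) (hd : 2 ≤ d) (r ε : ℝ) (hr : 1 < r) (hε : ε ∈ Set.Ioo (0 : ℝ) 1)
    (z : Fin d → ℂ) (q : Polynomial ℂ)
    (hq : q = ∏ i, (Polynomial.X - Polynomial.C (z i)))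
    (hroots : ∀ i, ‖z i‖ < r)
    (hderiv : ∀ n, (d : ℝ) * ε ^ (d - 1) ≤ ‖(Polynomial.derivative q).eval (z n)‖) :
    ∀ i j : Fin d, i ≠ j →
      (d : ℝ) ^ d * ε ^ (d * (d - 1)) / (2 * r) ^ (d * (d - 1) - 1) ≤
        ‖z i - z j‖ :=
  stmt2_general d r ε hε z q hq hroots hderiv
end

section
/- Fix an integer d ≥ 2. For all ε ∈ (0,1) and all sufficiently large ρ > 0 the following holds. Let p be a monic polynomial of degree d such that: (i) every ζ ∈ p^{−1}(α) satisfies |ζ| < 2ρ and every critical point c of p satisfies |c| < 2ρ; (ii) max_{|z|<2ρ}|p'(z)| < ρ^d; (iii) dist(ζ, Crit(p)) > ε/ρ^d for every ζ ∈ p^{−1}(α). Then for w₁, w₂ ∈ ℂ with e^{w₁}, e^{w₂} ∈ p^{−1}(α), e^{w₁} ≠ e^{w₂}, and Re w₁, Re w₂ < log(2ρ), we have |w₁ − w₂| > (ε/ρ)^{d⁴}. -/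
/-! Write `ζᵢ = exp wᵢ`. Factoring `p'` over its critical points bounds `|p'(ζ₁)|` below by
`(ε/ρ^d)^(d-1)`, while factoring `p - α` over its roots gives
`p'(ζ₁) = (ζ₁ - ζ₂) ∏ (ζ₁ - a)` with a product of at most `d - 2` factors of size `< 4ρ`.
Since `|exp'| < 2ρ` on `Re w < log 2ρ`, also `|ζ₁ - ζ₂| ≤ 2ρ |w₁ - w₂|`; for `ρ ≥ 4` the
resulting lower bound on `|w₁ - w₂|` beats `(ε/ρ)^(d⁴)`. -/

open Polynomial

section NormedField

variable {ι K : Type*} [NormedField K]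

lemma Multiset.norm_prod_map (s : Multiset ι) (f : ι → K) :
    ‖(s.map f).prod‖ = (s.map fun i => ‖f i‖).prod := by
  simpa [Multiset.map_map] using map_multiset_prod (normHom : K →*₀ ℝ) (s.map f)

lemma Multiset.norm_prod_map_le_pow (s : Multiset ι) (f : ι → K) {r : ℝ}
    (h : ∀ i ∈ s, ‖f i‖ ≤ r) : ‖(s.map f).prod‖ ≤ r ^ card s := by
  rw [Multiset.norm_prod_map, ← Multiset.prod_replicate, ← Multiset.map_const']
  exact Multiset.prod_map_le_prod_map₀ _ _ (fun _ _ => norm_nonneg _) h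

lemma Multiset.pow_le_norm_prod_map (s : Multiset ι) (f : ι → K) {r : ℝ} (hr : 0 ≤ r)
    (h : ∀ i ∈ s, r ≤ ‖f i‖) : r ^ card s ≤ ‖(s.map f).prod‖ := by
  rw [Multiset.norm_prod_map, ← Multiset.prod_replicate, ← Multiset.map_const']
  exact Multiset.prod_map_le_prod_map₀ _ _ (fun _ _ => hr) h

variable [IsAlgClosed K]

lemma Polynomial.norm_leadingCoeff_mul_pow_le_norm_eval (f : K[X]) {z : K} {δ : ℝ}
    (hδ : 0 ≤ δ) (h : ∀ c ∈ f.roots, δ ≤ ‖z - c‖) :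
    ‖f.leadingCoeff‖ * δ ^ f.natDegree ≤ ‖f.eval z‖ := by
  rw [(IsAlgClosed.splits f).eval_eq_prod_roots, norm_mul,
    ← IsAlgClosed.card_roots_eq_natDegree]
  exact mul_le_mul_of_nonneg_left (f.roots.pow_le_norm_prod_map _ hδ h) (norm_nonneg _)

lemma Polynomial.Monic.norm_eval_derivative_le_of_mem_roots {q : K[X]} (hq : q.Monic)
    {ζ₁ ζ₂ : K} (h₁ : ζ₁ ∈ q.roots) (h₂ : ζ₂ ∈ q.roots) (hne : ζ₁ ≠ ζ₂) {D : ℝ}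
    (hD : ∀ a ∈ q.roots, ‖ζ₁ - a‖ ≤ D) :
    ‖q.derivative.eval ζ₁‖ ≤ ‖ζ₁ - ζ₂‖ * D ^ (q.natDegree - 2) := by
  classical
  have h₂' : ζ₂ ∈ q.roots.erase ζ₁ := (Multiset.mem_erase_of_ne hne.symm).mpr h₂
  have hcard : Multiset.card ((q.roots.erase ζ₁).erase ζ₂) = q.natDegree - 2 := by
    rw [Multiset.card_erase_of_mem h₂', Multiset.card_erase_of_mem h₁,
      IsAlgClosed.card_roots_eq_natDegree]
    rfl
  rw [(IsAlgClosed.splits q).eval_root_derivative hq h₁, ← Multiset.cons_erase h₂',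
    Multiset.map_cons, Multiset.prod_cons, norm_mul, ← hcard]
  exact mul_le_mul_of_nonneg_left (Multiset.norm_prod_map_le_pow _ _ fun a ha =>
    hD a (Multiset.mem_of_mem_erase (Multiset.mem_of_mem_erase ha))) (norm_nonneg _)

lemma Polynomial.Monic.norm_eval_derivative_le_of_eval_eq {p : K[X]} (hp : p.Monic)
    (hdeg : 0 < p.natDegree) {α ζ₁ ζ₂ : K} (h₁ : p.eval ζ₁ = α) (h₂ : p.eval ζ₂ = α)
    (hne : ζ₁ ≠ ζ₂) {R : ℝ} (hR : ∀ ζ, p.eval ζ = α → ‖ζ‖ ≤ R) :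
    ‖p.derivative.eval ζ₁‖ ≤ ‖ζ₁ - ζ₂‖ * (2 * R) ^ (p.natDegree - 2) := by
  have hq : (p - C α).Monic :=
    hp.sub_of_left (degree_C_le.trans_lt (natDegree_pos_iff_degree_pos.mp hdeg))
  have hmem : ∀ ζ, ζ ∈ (p - C α).roots ↔ p.eval ζ = α := fun ζ => by
    simp [mem_roots hq.ne_zero, sub_eq_zero]
  have := hq.norm_eval_derivative_le_of_mem_roots ((hmem _).mpr h₁) ((hmem _).mpr h₂) hne
    (D := 2 * R) fun a ha => by
      linarith [norm_sub_le ζ₁ a, hR _ h₁, hR a ((hmem a).mp ha)]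
  rwa [derivative_sub, derivative_C, sub_zero, natDegree_sub_C] at this

end NormedField

lemma Polynomial.Monic.pow_le_norm_eval_derivative {p : ℂ[X]} (hp : p.Monic)
    (hdeg : 0 < p.natDegree) {z : ℂ} {δ : ℝ} (hδ : 0 ≤ δ)
    (h : ∀ c ∈ p.derivative.roots, δ ≤ ‖z - c‖) :
    δ ^ (p.natDegree - 1) ≤ ‖p.derivative.eval z‖ := by
  have := p.derivative.norm_leadingCoeff_mul_pow_le_norm_eval hδ h
  rw [leadingCoeff_derivative, hp.leadingCoeff, natDegree_derivative, one_mul,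
    Complex.norm_natCast] at this
  exact le_mul_of_one_le_left (by positivity) (by exact_mod_cast hdeg) |>.trans this

lemma Complex.norm_exp_sub_exp_le {r : ℝ} {w₁ w₂ : ℂ} (h₁ : w₁.re ≤ r) (h₂ : w₂.re ≤ r) :
    ‖exp w₁ - exp w₂‖ ≤ Real.exp r * ‖w₁ - w₂‖ :=
  (convex_halfSpace_re_le r).norm_image_sub_le_of_norm_deriv_le
    (fun z _ => differentiableAt_exp)
    (fun z hz => by rw [Complex.deriv_exp, Complex.norm_exp]; exact Real.exp_le_exp.mpr hz) h₂ h₁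

lemma div_pow_lt_of_div_pow_pow_le {d : ℕ} (hd : 2 ≤ d) {ε ρ x : ℝ} (hε₀ : 0 < ε)
    (hε₁ : ε < 1) (hρ : 4 ≤ ρ) (hx : 0 ≤ x)
    (h : (ε / ρ ^ d) ^ (d - 1) ≤ 2 * ρ * x * (4 * ρ) ^ (d - 2)) :
    (ε / ρ) ^ d ^ 4 < x := by
  have hρ₀ : 0 < ρ := by linarith
  set t := ε / ρ
  have ht₀ : 0 < t := by positivity
  have ht₁ : t < 1 := (div_lt_one hρ₀).mpr (by linarith)
  have hδ : t ^ d ≤ ε / ρ ^ d := by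
    rw [div_pow]
    gcongr
    exact pow_le_of_le_one hε₀.le hε₁.le (by omega)
  have hexponent : (d + 2) * (d - 1) < d ^ 4 := by
    obtain ⟨e, rfl⟩ : ∃ e, d = e + 2 := ⟨d - 2, by omega⟩
    rw [show e + 2 - 1 = e + 1 by omega]
    ring_nf
    nlinarith [Nat.zero_le (e ^ 3), Nat.zero_le (e ^ 4)]
  calc t ^ d ^ 4 < t ^ ((d + 2) * (d - 1)) := pow_lt_pow_right_of_lt_one₀ ht₀ ht₁ hexponent
    _ = (t ^ d) ^ (d - 1) * (t ^ 2) ^ (d - 1) := by ring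
    _ ≤ 2 * ρ * x * (4 * ρ) ^ (d - 2) * (t ^ 2) ^ (d - 1) := by
      gcongr
      exact (pow_le_pow_left₀ (by positivity) hδ (d - 1)).trans h
    _ ≤ 4 * ρ * x * (4 * ρ) ^ (d - 2) * (t ^ 2) ^ (d - 1) := by
      gcongr
      norm_num
    _ = x * (4 * ε ^ 2 / ρ) ^ (d - 1) := by
      rw [show 4 * ε ^ 2 / ρ = 4 * ρ * t ^ 2 by simp only [t]; field_simp,
        show d - 1 = d - 2 + 1 by omega]
      ring
    _ ≤ x := by
      refine mul_le_of_le_one_right hx (pow_le_one₀ (by positivity) ?_)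
      rw [div_le_one hρ₀]
      nlinarith

theorem stmt10 (d : ℕ) (hd : 2 ≤ d) (ε : ℝ) (hε : ε ∈ Set.Ioo (0 : ℝ) 1) :
    ∃ ρ₀ : ℝ, ∀ ρ : ℝ, ρ₀ ≤ ρ →
      ∀ (p : Polynomial ℂ) (α : ℂ), p.Monic → p.natDegree = d →
      (∀ ζ : ℂ, p.eval ζ = α → ‖ζ‖ < 2 * ρ) →
      (∀ c : ℂ, (Polynomial.derivative p).eval c = 0 → ‖c‖ < 2 * ρ) →
      (∀ z : ℂ, ‖z‖ < 2 * ρ →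
        ‖(Polynomial.derivative p).eval z‖ < ρ ^ d) →
      (∀ ζ c : ℂ, p.eval ζ = α → (Polynomial.derivative p).eval c = 0 →
        ε / ρ ^ d < dist ζ c) →
      ∀ w₁ w₂ : ℂ, p.eval (Complex.exp w₁) = α → p.eval (Complex.exp w₂) = α →
        Complex.exp w₁ ≠ Complex.exp w₂ →
        w₁.re < Real.log (2 * ρ) → w₂.re < Real.log (2 * ρ) →
        (ε / ρ) ^ (d ^ 4) < ‖w₁ - w₂‖ := by
  obtain ⟨hε₀, hε₁⟩ := hε
  refine ⟨4, fun ρ hρ p α hp hdeg hroots _ _ hdist w₁ w₂ h₁ h₂ hne hr₁ hr₂ => ?_⟩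
  have hρ₀ : 0 < ρ := by linarith
  have hlow : (ε / ρ ^ d) ^ (d - 1) ≤ ‖(derivative p).eval (Complex.exp w₁)‖ := by
    have hcrit : ∀ c ∈ (derivative p).roots, ε / ρ ^ d ≤ ‖Complex.exp w₁ - c‖ := fun c hc =>
      dist_eq_norm (Complex.exp w₁) c ▸ (hdist _ c h₁ (isRoot_of_mem_roots hc)).le
    simpa [hdeg] using hp.pow_le_norm_eval_derivative (by omega) (by positivity) hcrit
  have hup := hp.norm_eval_derivative_le_of_eval_eq (by omega) h₁ h₂ hne
    fun ζ hζ => (hroots ζ hζ).le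
  have hexp : ‖Complex.exp w₁ - Complex.exp w₂‖ ≤ 2 * ρ * ‖w₁ - w₂‖ := by
    simpa [Real.exp_log (by positivity : (0 : ℝ) < 2 * ρ)] using
      Complex.norm_exp_sub_exp_le hr₁.le hr₂.le
  refine div_pow_lt_of_div_pow_pow_le hd hε₀ hε₁ hρ (norm_nonneg _)
    (hlow.trans (hup.trans ?_))
  rw [hdeg, show 2 * (2 * ρ) = 4 * ρ by ring]
  gcongr
end
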